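/- arXiv:1606.05063 — 2 statements merged into one kernel-verified Lean document; each statement's English description precedes it below -/
import Mathlib

section
/- Let G be an abelian group and G₀ ⊆ G a non-half-factorial subset. Then there exist M ∈ ℕ and zero-sum sequences B_k ∈ B(G₀) for every k ∈ ℕ such that 2 ≤ |L(B_k)| ≤ M for all k, while min L(B_k) → ∞ as k → ∞. In particular, the elasticities ρ(L(B_k)) = max L(B_k)/min L(B_k) tend to 1 while |L(B_k)| ≥ 2. -/
variable {G : Type*} [AddCommGroup G]

/-- `S` is a minimal zero-sum sequence over `G`. -/
def IsMinZS (S : Multiset G) : Prop :=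
  S ≠ 0 ∧ S.sum = 0 ∧ ∀ T : Multiset G, T ≤ S → T ≠ 0 → T ≠ S → T.sum ≠ 0

/-- `S` is a minimal zero-sum sequence with all terms in `G₀`, i.e. an atom of `𝓑(G₀)`. -/
def IsMinZSOn (G₀ : Set G) (S : Multiset G) : Prop :=
  (∀ x ∈ S, x ∈ G₀) ∧ IsMinZS S

/-- The set of factorization lengths of `S` into atoms of the monoid `𝓑(G₀)` of zero-sum
sequences over `G₀`. -/
def ZSLengthsOn (G₀ : Set G) (S : Multiset G) : Set ℕ :=
  {n | ∃ l : Multiset (Multiset G),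
    Multiset.card l = n ∧ (∀ T ∈ l, IsMinZSOn G₀ T) ∧ l.sum = S}

/-- `G₀` is half-factorial: every zero-sum sequence over `G₀` has exactly one
factorization length. -/
def HalfFactorialSet (G₀ : Set G) : Prop :=
  ∀ B : Multiset G, (∀ x ∈ B, x ∈ G₀) → B.sum = 0 → ∃ n, ZSLengthsOn G₀ B = {n}


/-
Some zero-sum sequence `B` over `G₀` has two distinct factorization lengths `ℓ₁ ≠ ℓ₂`. Inside the
support of `B` pick a set `G₁` that is minimal among the supports of nonempty zero-sum sequences:
then every nonempty zero-sum sequence over `G₁` has support exactly `G₁`, which forces any two of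
them to be comparable, so `𝓑(G₁)` has a single atom `A`. Put `B_k = A^k B`; its lengths contain
`k + ℓ₁` and `k + ℓ₂`. In a factorization of `B_k`, every atom other than `A` leaves `G₁`, hence
uses a term of `B`, so there are at most `|B|` of them; these atoms live over the finite set
`supp(A) ∪ supp(B)`, so by Dickson's lemma they have length at most some `D`. Counting terms then
puts `L(B_k)` inside `[k - |B| D, k + 2|B|]`.
-/

open Multiset

theorem Multiset.le_of_nsmul_eq_nsmul {α : Type*} [DecidableEq α] {S A : Multiset α} {a s : ℕ}
    (h : a • S = s • A) (ha : 0 < a) (has : a ≤ s) : A ≤ S := by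
  refine le_iff_count.mpr fun x => ?_
  have hx := congrArg (count x) h
  rw [count_nsmul, count_nsmul] at hx
  nlinarith

theorem Multiset.exists_mem_count_nsmul_le {α : Type*} [DecidableEq α] {A : Multiset α}
    (S : Multiset α) (hA : A ≠ 0) : ∃ g ∈ A, count g S • A ≤ count g A • S := by
  -- `g` minimizes the ratio `count g S / count g A` over the support of `A`
  obtain ⟨g, hg, hmin⟩ := A.toFinset.exists_min_image
    (fun x => (count x S : ℚ) / count x A) (toFinset_nonempty.mpr hA)
  rw [mem_toFinset] at hg
  refine ⟨g, hg, le_iff_count.mpr fun x => ?_⟩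
  rw [count_nsmul, count_nsmul]
  by_cases hx : x ∈ A
  · have hratio := hmin x (mem_toFinset.mpr hx)
    rw [div_le_div_iff₀ (by exact_mod_cast count_pos.mpr hg)
      (by exact_mod_cast count_pos.mpr hx)] at hratio
    exact_mod_cast hratio.trans_eq (mul_comm _ _)
  · simp [count_eq_zero.mpr hx]

theorem Multiset.card_le_card_filter_sum {α : Type*} (p : α → Prop) [DecidablePred p]
    (l : Multiset (Multiset α)) (h : ∀ T ∈ l, ∃ x ∈ T, p x) :
    card l ≤ card (filter p l.sum) := by
  induction l using Multiset.induction with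
  | empty => simp
  | cons T l ih =>
    obtain ⟨x, hxT, hx⟩ := h T (mem_cons_self T l)
    have hT : 0 < card (filter p T) := card_pos_iff_exists_mem.mpr ⟨x, mem_filter.mpr ⟨hxT, hx⟩⟩
    have hl := ih fun U hU => h U (mem_cons_of_mem hU)
    rw [card_cons, sum_cons, filter_add, card_add]
    omega

theorem IsMinZS.eq_of_le {S T : Multiset G} (hT : IsMinZS T) (hle : S ≤ T) (hS : S ≠ 0)
    (hs : S.sum = 0) : S = T :=
  by_contra fun hne => hT.2.2 S hle hS hne hs

theorem exists_isMinZS_le {S : Multiset G} (hS : S ≠ 0) (hs : S.sum = 0) :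
    ∃ T ≤ S, IsMinZS T := by
  obtain ⟨T, ⟨hTS, hT0, hTs⟩, hmin⟩ := wellFounded_lt.has_min
    {T : Multiset G | T ≤ S ∧ T ≠ 0 ∧ T.sum = 0} ⟨S, le_rfl, hS, hs⟩
  exact ⟨T, hTS, hT0, hTs, fun U hUT hU0 hne hUs =>
    hmin U ⟨hUT.trans hTS, hU0, hUs⟩ (lt_of_le_of_ne hUT hne)⟩

theorem ZSLengthsOn_zero (G₀ : Set G) : ZSLengthsOn G₀ 0 = {0} := by
  ext n
  refine ⟨fun ⟨l, hcard, hl, hsum⟩ => ?_, ?_⟩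
  swap
  · rintro rfl
    exact ⟨0, rfl, by simp, rfl⟩
  have hl0 : l = 0 := eq_zero_of_forall_notMem fun T hT =>
    (hl T hT).2.1 (sum_eq_zero_iff.mp hsum T hT)
  simp [← hcard, hl0]

theorem ZSLengthsOn_nonempty {G₀ : Set G} {B : Multiset G} (hB : ∀ x ∈ B, x ∈ G₀)
    (hs : B.sum = 0) : (ZSLengthsOn G₀ B).Nonempty := by
  classical
  induction B using Multiset.strongInductionOn with
  | ih B ih =>
  rcases eq_or_ne B 0 with rfl | hB0
  · exact ⟨0, 0, rfl, by simp, rfl⟩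
  obtain ⟨T, hTB, hT⟩ := exists_isMinZS_le hB0 hs
  have hBT : T + (B - T) = B := add_tsub_cancel_of_le hTB
  have hrest : (B - T).sum = 0 := by
    have := congrArg Multiset.sum hBT
    rwa [sum_add, hT.2.1, zero_add, hs] at this
  obtain ⟨n, l, -, hl, hlsum⟩ := ih (B - T)
    ((lt_add_of_pos_left _ (pos_iff_ne_zero.mpr hT.1)).trans_eq hBT)
    (fun x hx => hB x (mem_of_le (Multiset.sub_le_self _ _) hx)) hrest
  exact ⟨_, T ::ₘ l, rfl, forall_mem_cons.mpr ⟨⟨fun x hx => hB x (mem_of_le hTB hx), hT⟩, hl⟩,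
    by rw [sum_cons, hlsum, hBT]⟩

theorem exists_ne_mem_ZSLengthsOn {G₀ : Set G} (h : ¬ HalfFactorialSet G₀) :
    ∃ B : Multiset G, (∀ x ∈ B, x ∈ G₀) ∧ B.sum = 0 ∧ B ≠ 0 ∧
      ∃ ℓ₁ ∈ ZSLengthsOn G₀ B, ∃ ℓ₂ ∈ ZSLengthsOn G₀ B, ℓ₁ ≠ ℓ₂ := by
  obtain ⟨B, hBG, hBs, hL⟩ : ∃ B : Multiset G, (∀ x ∈ B, x ∈ G₀) ∧ B.sum = 0 ∧
      ∀ n, ZSLengthsOn G₀ B ≠ {n} := by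
    simpa [HalfFactorialSet] using h
  obtain ⟨ℓ₁, hℓ₁⟩ := ZSLengthsOn_nonempty hBG hBs
  obtain ⟨ℓ₂, hℓ₂, hne⟩ : ∃ ℓ₂ ∈ ZSLengthsOn G₀ B, ℓ₂ ≠ ℓ₁ := by
    by_contra! hc
    exact hL ℓ₁ (Set.eq_singleton_iff_unique_mem.mpr ⟨hℓ₁, hc⟩)
  refine ⟨B, hBG, hBs, ?_, ℓ₁, hℓ₁, ℓ₂, hℓ₂, hne.symm⟩
  rintro rfl
  simp only [ZSLengthsOn_zero, Set.mem_singleton_iff] at hℓ₁ hℓ₂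
  exact hne (hℓ₂.trans hℓ₁.symm)

theorem add_mem_ZSLengthsOn_nsmul_add {G₀ : Set G} {A B : Multiset G} (hA : IsMinZSOn G₀ A)
    {ℓ : ℕ} (hℓ : ℓ ∈ ZSLengthsOn G₀ B) (k : ℕ) : k + ℓ ∈ ZSLengthsOn G₀ (k • A + B) := by
  obtain ⟨l, rfl, hl, rfl⟩ := hℓ
  refine ⟨replicate k A + l, by simp, fun T hT => ?_, by simp [sum_replicate]⟩
  rcases mem_add.mp hT with hT | hT
  · exact eq_of_mem_replicate hT ▸ hA
  · exact hl T hT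

/- Dickson's lemma: the atoms over a finite set form an antichain of `ℕ^F`. -/
theorem finite_setOf_isMinZS {F : Set G} (hF : F.Finite) :
    {T : Multiset G | IsMinZS T ∧ ∀ x ∈ T, x ∈ F}.Finite := by
  classical
  have : Finite F := hF.to_subtype
  set S := {T : Multiset G | IsMinZS T ∧ ∀ x ∈ T, x ∈ F}
  let u : Multiset G → F → ℕ := fun T x => count (x : G) T
  have hle : ∀ T ∈ S, ∀ T' ∈ S, u T ≤ u T' → T ≤ T' := fun T hT T' _ h =>
    le_iff_count.mpr fun x => if hx : x ∈ F then h ⟨x, hx⟩ else by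
      simp [count_eq_zero.mpr fun hxT => hx (hT.2 x hxT)]
  have hinj : Set.InjOn u S := fun T hT T' hT' h =>
    le_antisymm (hle T hT T' hT' h.le) (hle T' hT' T hT h.ge)
  refine Set.Finite.of_finite_image (WellQuasiOrderedLE.finite_of_isAntichain ?_) hinj
  rintro _ ⟨T, hT, rfl⟩ _ ⟨T', hT', rfl⟩ hne h
  exact hne (congrArg u (hT'.1.eq_of_le (hle T hT T' hT' h) hT.1.1 hT.1.2.1))

theorem exists_card_le_of_isMinZS {F : Set G} (hF : F.Finite) :
    ∃ D, ∀ T : Multiset G, IsMinZS T → (∀ x ∈ T, x ∈ F) → card T ≤ D := by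
  obtain ⟨D, hD⟩ := ((finite_setOf_isMinZS hF).image card).bddAbove
  exact ⟨D, fun T hT hTF => hD ⟨T, ⟨hT, hTF⟩, rfl⟩⟩

theorem exists_zeroSum_minimal_support {B : Multiset G} (hB : B ≠ 0) (hs : B.sum = 0) :
    ∃ S : Multiset G, S ≠ 0 ∧ S.sum = 0 ∧ (∀ x ∈ S, x ∈ B) ∧
      ∀ T : Multiset G, T ≠ 0 → T.sum = 0 → (∀ x ∈ T, x ∈ S) → ∀ x ∈ S, x ∈ T := by
  classical
  obtain ⟨S, ⟨hS0, hSs, hSB⟩, hmin⟩ := (measure fun S : Multiset G => S.toFinset.card).wf.has_min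
    {S | S ≠ 0 ∧ S.sum = 0 ∧ ∀ x ∈ S, x ∈ B} ⟨B, hB, hs, fun _ => id⟩
  refine ⟨S, hS0, hSs, hSB, fun T hT0 hTs hTS x hx => ?_⟩
  have hsub : T.toFinset ⊆ S.toFinset := fun y hy => mem_toFinset.mpr (hTS y (mem_toFinset.mp hy))
  have heq := Finset.eq_of_subset_of_card_le hsub
    (not_lt.mp (hmin T ⟨hT0, hTs, fun y hy => hSB y (hTS y hy)⟩))
  exact mem_toFinset.mp (heq ▸ mem_toFinset.mpr hx)

theorem le_or_le_of_support_minimal {F : Multiset G}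
    (hF : ∀ T : Multiset G, T ≠ 0 → T.sum = 0 → (∀ x ∈ T, x ∈ F) → ∀ x ∈ F, x ∈ T)
    {S A : Multiset G} (hS : S ≠ 0) (hSs : S.sum = 0) (hSF : ∀ x ∈ S, x ∈ F)
    (hA : A ≠ 0) (hAs : A.sum = 0) (hAF : ∀ x ∈ A, x ∈ F) : A ≤ S ∨ S ≤ A := by
  classical
  obtain ⟨g, hgA, hle⟩ := exists_mem_count_nsmul_le S hA
  set a := count g A
  set s := count g S
  -- `Z` is a zero-sum sequence over `F` that misses `g`, so it must be empty
  set Z := a • S - s • A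
  have hZ : s • A + Z = a • S := add_tsub_cancel_of_le hle
  have hZs : Z.sum = 0 := by
    have := congrArg Multiset.sum hZ
    rwa [sum_add, sum_nsmul, sum_nsmul, hAs, hSs, smul_zero, smul_zero, zero_add] at this
  have hgZ : g ∉ Z := by
    rw [← count_eq_zero, count_sub, count_nsmul, count_nsmul, mul_comm, Nat.sub_self]
  have hZ0 : Z = 0 := by_contra fun hZ0 => hgZ <| hF Z hZ0 hZs
    (fun x hx => hSF x (mem_of_mem_nsmul (mem_of_le (Multiset.sub_le_self _ _) hx))) g (hAF g hgA)
  have heq : a • S = s • A := by rw [← hZ, hZ0, add_zero]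
  have ha : 0 < a := count_pos.mpr hgA
  have hs : 0 < s := count_pos.mpr (hF S hS hSs hSF g (hAF g hgA))
  rcases le_total a s with has | hsa
  · exact .inl (le_of_nsmul_eq_nsmul heq ha has)
  · exact .inr (le_of_nsmul_eq_nsmul heq.symm hs hsa)

theorem exists_isMinZS_unique_on_support {B : Multiset G} (hB : B ≠ 0) (hs : B.sum = 0) :
    ∃ A : Multiset G, IsMinZS A ∧ (∀ x ∈ A, x ∈ B) ∧
      ∀ T : Multiset G, IsMinZS T → (∀ x ∈ T, x ∈ A) → T = A := by
  obtain ⟨S, hS0, hSs, hSB, hSmin⟩ := exists_zeroSum_minimal_support hB hs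
  obtain ⟨A, hAS, hA⟩ := exists_isMinZS_le hS0 hSs
  have hAS' : ∀ x ∈ A, x ∈ S := fun _ hx => mem_of_le hAS hx
  refine ⟨A, hA, fun x hx => hSB x (hAS' x hx), fun T hT hTA => ?_⟩
  rcases le_or_le_of_support_minimal hSmin hT.1 hT.2.1 (fun x hx => hAS' x (hTA x hx))
    hA.1 hA.2.1 hAS' with hle | hle
  · exact (hT.eq_of_le hle hA.1 hA.2.1).symm
  · exact hA.eq_of_le hle hT.1 hT.2.1

theorem ZSLengthsOn_nsmul_add_subset_Icc {G₀ : Set G} {A B : Multiset G} (hA : IsMinZS A)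
    (hAuniq : ∀ T : Multiset G, IsMinZS T → (∀ x ∈ T, x ∈ A) → T = A) {D : ℕ}
    (hD : ∀ T : Multiset G, IsMinZS T → (∀ x ∈ T, x ∈ A + B) → card T ≤ D) (k : ℕ) :
    ZSLengthsOn G₀ (k • A + B) ⊆ Set.Icc (k - card B * D) (k + 2 * card B) := by
  classical
  rintro n ⟨l, rfl, hl, hsum⟩
  set l' := l.filter fun T => ¬T = A
  have hsplit : replicate (count A l) A + l' = l := by rw [← filter_eq', filter_add_not]
  have hl'sum : l'.sum ≤ k • A + B := by
    rw [← hsum, ← hsplit, sum_add]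
    exact le_add_self
  -- every atom other than `A` leaves the support of `A`, hence uses a term of `B`
  have hl'card : card l' ≤ card B := calc
    card l' ≤ card (filter (· ∉ A) l'.sum) := card_le_card_filter_sum _ l' fun T hT => by
        obtain ⟨hTl, hTA⟩ := mem_filter.mp hT
        by_contra! h
        exact hTA (hAuniq T (hl T hTl).2 h)
    _ ≤ card (filter (· ∉ A) B) := by
        rw [← zero_add (filter _ B), ← filter_eq_nil.mpr fun x hx => not_not.mpr
          (mem_of_mem_nsmul hx), ← filter_add]
        exact card_le_card (filter_le_filter _ hl'sum)
    _ ≤ card B := card_le_card (filter_le _ _)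
  have hl'big : card l'.sum ≤ card B * D := calc
    card l'.sum = (l'.map card).sum := card_join l'
    _ ≤ card (l'.map card) • D := sum_le_card_nsmul _ _ fun m hm => by
        obtain ⟨T, hT, rfl⟩ := mem_map.mp hm
        have hTl := (mem_filter.mp hT).1
        have hTle : T ≤ k • A + B := hsum ▸ le_sum_of_mem hTl
        exact hD T (hl T hTl).2 fun x hx =>
          mem_add.mpr ((mem_add.mp (mem_of_le hTle hx)).imp mem_of_mem_nsmul id)
    _ ≤ card B * D := by rw [card_map, smul_eq_mul]; exact Nat.mul_le_mul_right _ hl'card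
  have hterms : count A l * card A + card l'.sum = k * card A + card B := by
    have := congrArg card hsum
    rwa [← hsplit, sum_add, card_add, sum_replicate, card_nsmul, card_add, card_nsmul] at this
  have hA1 : 0 < card A := card_pos.mpr hA.1
  have hn := congrArg card hsplit
  rw [card_add, card_replicate] at hn
  have hlow : k ≤ count A l + card B * D := Nat.le_of_mul_le_mul_right
    (by nlinarith [Nat.le_mul_of_pos_right (card B * D) hA1]) hA1
  have hhigh : count A l ≤ k + card B := Nat.le_of_mul_le_mul_right
    (by nlinarith [Nat.le_mul_of_pos_right (card B) hA1]) hA1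
  constructor <;> omega

/-- If `G₀ ⊆ G` is not half-factorial, then there exist `M ∈ ℕ` and zero-sum sequences
`B_k` over `G₀` (for `k ∈ ℕ`) such that `2 ≤ |L(B_k)| ≤ M` for all `k`, while
`min L(B_k) → ∞` as `k → ∞`. -/
theorem stmt6 (G₀ : Set G) (h : ¬ HalfFactorialSet G₀) :
    ∃ (M : ℕ) (B : ℕ → Multiset G),
      (∀ k, (∀ x ∈ B k, x ∈ G₀) ∧ (B k).sum = 0 ∧
        2 ≤ (ZSLengthsOn G₀ (B k)).ncard ∧ (ZSLengthsOn G₀ (B k)).ncard ≤ M) ∧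
      Filter.Tendsto (fun k => sInf (ZSLengthsOn G₀ (B k))) Filter.atTop Filter.atTop := by
  obtain ⟨B₀, hB₀G, hB₀s, hB₀, ℓ₁, hℓ₁, ℓ₂, hℓ₂, hne⟩ := exists_ne_mem_ZSLengthsOn h
  obtain ⟨A, hA, hAB₀, hAuniq⟩ := exists_isMinZS_unique_on_support hB₀ hB₀s
  obtain ⟨D, hD⟩ := exists_card_le_of_isMinZS (A + B₀ : Multiset G).finite_toSet
  have hIcc := ZSLengthsOn_nsmul_add_subset_Icc (G₀ := G₀) hA hAuniq hD
  have hmem : ∀ k, ∀ ℓ ∈ ZSLengthsOn G₀ B₀, k + ℓ ∈ ZSLengthsOn G₀ (k • A + B₀) :=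
    fun k _ hℓ => add_mem_ZSLengthsOn_nsmul_add ⟨fun x hx => hB₀G x (hAB₀ x hx), hA⟩ hℓ k
  refine ⟨card B₀ * D + 2 * card B₀ + 1, fun k => k • A + B₀, fun k => ⟨fun x hx => ?_, ?_, ?_, ?_⟩,
    ?_⟩
  · exact (mem_add.mp hx).elim (fun hx => hB₀G x (hAB₀ x (mem_of_mem_nsmul hx))) (hB₀G x)
  · rw [sum_add, sum_nsmul, hA.2.1, smul_zero, hB₀s, add_zero]
  · calc 2 = ({k + ℓ₁, k + ℓ₂} : Set ℕ).ncard := (Set.ncard_pair (by omega)).symm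
      _ ≤ _ := Set.ncard_le_ncard
          (Set.insert_subset_iff.mpr ⟨hmem k _ hℓ₁, Set.singleton_subset_iff.mpr (hmem k _ hℓ₂)⟩)
          ((Set.finite_Icc _ _).subset (hIcc k))
  · calc _ ≤ (Set.Icc _ _).ncard := Set.ncard_le_ncard (hIcc k) (Set.finite_Icc _ _)
      _ ≤ _ := by rw [Set.ncard_Icc_nat]; omega
  · exact Filter.tendsto_atTop_mono (fun k => (hIcc k (Nat.sInf_mem ⟨_, hmem k _ hℓ₁⟩)).1)
      (Filter.tendsto_sub_atTop_nat _)
end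

section
/- Let D = D₁ × … × D_n be a finite direct product of strongly primary monoids, none of which is half-factorial. Then for every finite nonempty set L ⊆ ℕ there exists y_L ∈ ℕ₀ such that for all y ≥ y_L, the shifted set y + L is not a set of lengths of D, i.e., y + L ∉ L(D). -/
/-!
If `y + L` were the set of lengths of `b`, then `b` would have a factorization into more than
`|L| · ∑ M(aᵢ)` atoms. Every atom of the product is a non-unit in some coordinate, so some
coordinate `i` carries `|L| · M(aᵢ)` of them and strong primality gives `aᵢ ^ |L| ∣ bᵢ`.
As `aᵢ` has factorizations of two lengths `p ≠ q`, mixing them inside `aᵢ ^ |L|` produces the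
`|L| + 1` distinct lengths `c + j (q - p)`, `0 ≤ j ≤ |L|`, of `b`: too many for `y + L`.
-/

open Classical

/-- The set of factorization lengths of `a` into irreducible elements (atoms);
by convention `{0}` for invertible elements. -/
noncomputable def mLengths {H : Type*} [Monoid H] (a : H) : Set ℕ :=
  if IsUnit a then {0}
  else {n | ∃ l : List H, l.length = n ∧ (∀ x ∈ l, Irreducible x) ∧ l.prod = a}

/-- A commutative cancellative monoid `M` is strongly primary if it has a non-unit and for
every non-unit `a` there is `n ∈ ℕ` such that every product of `n` non-units lies in `aM`. -/
def StronglyPrimary (M : Type*) [CancelCommMonoid M] : Prop :=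
  (∃ a : M, ¬IsUnit a) ∧
    ∀ a : M, ¬IsUnit a → ∃ n : ℕ, 0 < n ∧
      ∀ l : List M, l.length = n → (∀ x ∈ l, ¬IsUnit x) → a ∣ l.prod

section Lengths

variable {H : Type*} [CommMonoid H]

/-- Working up to associates absorbs the convention `mLengths u = {0}` for units `u`. -/
theorem mem_mLengths_iff {b : H} {n : ℕ} :
    n ∈ mLengths b ↔
      ∃ l : List H, l.length = n ∧ (∀ x ∈ l, Irreducible x) ∧ Associated l.prod b := by
  unfold mLengths
  split_ifs with hb
  · refine ⟨?_, ?_⟩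
    · rintro rfl
      exact ⟨[], rfl, by simp, associated_one_iff_isUnit.mpr hb |>.symm⟩
    · rintro ⟨_ | ⟨x, l⟩, rfl, hl, hlb⟩
      · rfl
      · have hx := List.prod_isUnit_iff.mp (hlb.isUnit_iff.mpr hb) x List.mem_cons_self
        exact ((hl x List.mem_cons_self).not_isUnit hx).elim
  · refine ⟨fun ⟨l, hn, hl, hlb⟩ => ⟨l, hn, hl, hlb ▸ .refl _⟩, ?_⟩
    rintro ⟨_ | ⟨x, l⟩, rfl, hl, u, rfl⟩
    · simp at hb
    · refine ⟨(x * u) :: l, rfl, ?_, by simp [mul_right_comm]⟩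
      simp only [List.mem_cons, forall_eq_or_imp] at hl ⊢
      exact ⟨(irreducible_mul_isUnit u.isUnit).mpr hl.1, hl.2⟩

theorem not_isUnit_of_mem_mLengths_of_ne {a : H} {m k : ℕ} (hm : m ∈ mLengths a)
    (hk : k ∈ mLengths a) (hmk : m ≠ k) : ¬IsUnit a := by
  intro ha
  simp only [mLengths, if_pos ha, Set.mem_singleton_iff] at hm hk
  exact hmk (hm.trans hk.symm)

theorem zero_mem_mLengths_one : 0 ∈ mLengths (1 : H) := by
  simp [mLengths]

theorem add_mem_mLengths_mul {a b : H} {m n : ℕ} (ha : m ∈ mLengths a) (hb : n ∈ mLengths b) :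
    m + n ∈ mLengths (a * b) := by
  obtain ⟨l, rfl, hl, hla⟩ := mem_mLengths_iff.mp ha
  obtain ⟨l', rfl, hl', hlb⟩ := mem_mLengths_iff.mp hb
  refine mem_mLengths_iff.mpr ⟨l ++ l', List.length_append, ?_, ?_⟩
  · simpa only [List.mem_append, or_imp, forall_and] using ⟨hl, hl'⟩
  · simpa only [List.prod_append] using hla.mul_mul hlb

theorem mul_mem_mLengths_pow {a : H} {m : ℕ} (ha : m ∈ mLengths a) (k : ℕ) :
    k * m ∈ mLengths (a ^ k) := by
  induction k with
  | zero => simpa using zero_mem_mLengths_one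
  | succ k ih => simpa [pow_succ, add_mul] using add_mem_mLengths_mul ih ha

/-- Factor `j` of the `t` copies of `a` with length `q` and the others with length `p`. -/
theorem exists_add_mul_mem_mLengths_pow_mul {a d : H} {p q F : ℕ} (hp : p ∈ mLengths a)
    (hq : q ∈ mLengths a) (hpq : p ≠ q) (hF : F ∈ mLengths d) (t : ℕ) :
    ∃ c r, 0 < r ∧ ∀ j ≤ t, c + j * r ∈ mLengths (a ^ t * d) := by
  wlog hlt : p < q generalizing p q
  · exact this hq hp hpq.symm (by omega)
  refine ⟨t * p + F, q - p, by omega, fun j hj => ?_⟩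
  obtain ⟨k, rfl⟩ := Nat.exists_eq_add_of_le hj
  obtain ⟨r, rfl⟩ := Nat.exists_eq_add_of_le hlt.le
  have := add_mem_mLengths_mul
    (add_mem_mLengths_mul (mul_mem_mLengths_pow hq j) (mul_mem_mLengths_pow hp k)) hF
  rw [← pow_add] at this
  convert this using 1
  simp only [Nat.add_sub_cancel_left]
  ring

end Lengths

theorem le_ncard_of_forall_add_mul_mem {S : Set ℕ} (hS : S.Finite) {c r t : ℕ} (hr : 0 < r)
    (h : ∀ j ≤ t, c + j * r ∈ S) : t + 1 ≤ S.ncard := by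
  have hinj : Function.Injective fun j => c + j * r := fun j j' hjj' => by
    simpa [hr.ne'] using hjj'
  calc t + 1 = ((Finset.range (t + 1)).image fun j => c + j * r).card := by
        rw [Finset.card_image_of_injective _ hinj, Finset.card_range]
    _ ≤ S.ncard := by
        rw [← Set.ncard_coe_finset]
        refine Set.ncard_le_ncard ?_ hS
        intro x hx
        simp only [Finset.coe_image, Finset.coe_range, Set.mem_image, Set.mem_Iio] at hx
        obtain ⟨j, hj, rfl⟩ := hx
        exact h j (by omega)

section StronglyPrimary

variable {M : Type*}

/-- The paper's `M(a)` is the least `N` with `DvdNonunitProds a N`. -/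
def DvdNonunitProds [CommMonoid M] (a : M) (N : ℕ) : Prop :=
  ∀ l : List M, l.length = N → (∀ x ∈ l, ¬IsUnit x) → a ∣ l.prod

theorem DvdNonunitProds.pow_dvd_prod [CommMonoid M] {a : M} {N : ℕ} (h : DvdNonunitProds a N)
    (t : ℕ) {l : List M} (hl : ∀ x ∈ l, ¬IsUnit x) (hlen : t * N ≤ l.length) :
    a ^ t ∣ l.prod := by
  induction t generalizing l with
  | zero => simp
  | succ t ih =>
    rw [← List.prod_take_mul_prod_drop l N, pow_succ']
    refine mul_dvd_mul (h _ ?_ fun x hx => hl x (List.mem_of_mem_take hx))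
      (ih (fun x hx => hl x (List.mem_of_mem_drop hx)) ?_)
    all_goals simp only [List.length_take, List.length_drop]; rw [Nat.succ_mul] at hlen; omega

theorem DvdNonunitProds.length_le [CancelCommMonoid M] {a : M} {N : ℕ}
    (h : DvdNonunitProds a N) {l : List M} (hl : ∀ x ∈ l, ¬IsUnit x) (hla : l.prod = a) :
    l.length ≤ N := by
  by_contra! hN
  obtain ⟨c, hc⟩ := h (l.take N) (by simp [hN.le]) fun x hx => hl x (List.mem_of_mem_take hx)
  have hunit : c * (l.drop N).prod = 1 := mul_left_cancel (a := a) <| by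
    rw [mul_one, ← mul_assoc, ← hc, List.prod_take_mul_prod_drop, hla]
  obtain ⟨x, hx⟩ := List.exists_mem_of_length_pos (l := l.drop N) (by simp [hN])
  exact hl x (List.mem_of_mem_drop hx)
    (List.prod_isUnit_iff.mp (.of_mul_eq_one_right c hunit) x hx)

/-- A factorization into non-units of maximal length is a factorization into atoms. -/
theorem exists_irreducible_factors_of_length_le [CommMonoid M] {a : M} (ha : ¬IsUnit a) {N : ℕ}
    (hN : ∀ l : List M, (∀ x ∈ l, ¬IsUnit x) → l.prod = a → l.length ≤ N) :
    ∃ l : List M, (∀ x ∈ l, Irreducible x) ∧ l.prod = a := by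
  let P k := ∃ l : List M, l.length = k ∧ (∀ x ∈ l, ¬IsUnit x) ∧ l.prod = a
  have hP1 : P 1 := ⟨[a], rfl, by simpa using ha, by simp⟩
  have hbound : ∀ k, P k → k ≤ N := fun k ⟨l, hk, hl, hla⟩ => hk ▸ hN l hl hla
  obtain ⟨l, hlen, hl, hla⟩ : P (Nat.findGreatest P N) := Nat.findGreatest_spec (hbound 1 hP1) hP1
  have hmax : ¬P (l.length + 1) := fun hP =>
    Nat.findGreatest_is_greatest (by omega) (hbound _ hP) hP
  refine ⟨l, fun x hx => ?_, hla⟩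
  by_contra hx'
  obtain ⟨u, v, hxuv, hu, hv⟩ : ∃ u v, x = u * v ∧ ¬IsUnit u ∧ ¬IsUnit v := by
    simpa [irreducible_iff, hl x hx] using hx'
  refine hmax ⟨u :: v :: l.erase x, ?_, ?_, ?_⟩
  · have := List.length_pos_of_mem hx
    simp [List.length_erase_of_mem hx]; omega
  · simp only [List.mem_cons, forall_eq_or_imp]
    exact ⟨hu, hv, fun y hy => hl y (List.mem_of_mem_erase hy)⟩
  · rw [List.prod_cons, List.prod_cons, ← mul_assoc, ← hxuv, List.prod_erase hx, hla]

theorem StronglyPrimary.mLengths_nonempty [CancelCommMonoid M] (h : StronglyPrimary M) (a : M) :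
    (mLengths a).Nonempty := by
  by_cases ha : IsUnit a
  · exact ⟨0, by simp [mLengths, ha]⟩
  obtain ⟨N, -, hN⟩ := h.2 a ha
  obtain ⟨l, hl, rfl⟩ := exists_irreducible_factors_of_length_le ha
    fun l' hl' hla => DvdNonunitProds.length_le hN hl' hla
  exact ⟨l.length, mem_mLengths_iff.mpr ⟨l, rfl, hl, .refl _⟩⟩

end StronglyPrimary

section Pi

variable {ι : Type*} {D : ι → Type*} [∀ i, CommMonoid (D i)]

theorem Irreducible.mulSingle [DecidableEq ι] {i : ι} {x : D i} (hx : Irreducible x) :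
    Irreducible (Pi.mulSingle i x) := by
  refine ⟨fun h => hx.not_isUnit (by simpa using h.apply i), fun u v huv => ?_⟩
  have hoff : ∀ j ≠ i, IsUnit (u j) ∧ IsUnit (v j) := fun j hj =>
    IsUnit.mul_iff.mp (by rw [← Pi.mul_apply, ← huv, Pi.mulSingle_eq_of_ne hj]; exact isUnit_one)
  refine (hx.isUnit_or_isUnit (by simpa using congr_fun huv i)).imp ?_ ?_ <;>
  · intro h
    refine Pi.isUnit_iff.mpr fun j => ?_
    rcases eq_or_ne j i with rfl | hj
    exacts [h, by simp [hoff j hj]]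

theorem mem_mLengths_mulSingle [DecidableEq ι] {i : ι} {x : D i} {m : ℕ}
    (hm : m ∈ mLengths x) : m ∈ mLengths (Pi.mulSingle i x) := by
  obtain ⟨l, rfl, hl, hlx⟩ := mem_mLengths_iff.mp hm
  refine mem_mLengths_iff.mpr ⟨l.map (Pi.mulSingle i), List.length_map _, ?_, ?_⟩
  · simpa using fun x hx => (hl x hx).mulSingle
  · have := hlx.map (MonoidHom.mulSingle D i)
    rwa [map_list_prod] at this

theorem mLengths_pi_nonempty [Fintype ι] {b : ∀ i, D i} (hb : ∀ i, (mLengths (b i)).Nonempty) :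
    (mLengths b).Nonempty := by
  rw [← Finset.univ_prod_mulSingle b]
  refine Finset.prod_induction _ (fun x => (mLengths x).Nonempty) ?_ ⟨0, zero_mem_mLengths_one⟩
    fun i _ => (hb i).mono fun _ => mem_mLengths_mulSingle
  rintro x y ⟨m, hm⟩ ⟨n, hn⟩
  exact ⟨m + n, add_mem_mLengths_mul hm hn⟩

theorem length_le_sum_countP_not_isUnit_apply [Fintype ι] {l : List (∀ i, D i)}
    (hl : ∀ x ∈ l, ¬IsUnit x) : l.length ≤ ∑ i, l.countP fun x => ¬IsUnit (x i) := by
  induction l with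
  | nil => simp
  | cons x l ih =>
    simp only [List.mem_cons, forall_eq_or_imp] at hl
    obtain ⟨i, hi⟩ := not_forall.mp (mt Pi.isUnit_iff.mpr hl.1)
    simp only [List.countP_cons, Finset.sum_add_distrib, List.length_cons]
    gcongr
    · exact ih hl.2
    · simpa [hi] using Finset.single_le_sum (f := fun j => if ¬IsUnit (x j) then 1 else 0)
        (by simp) (Finset.mem_univ i)

/-- Pigeonhole: some coordinate `i` carries at least `t * M i` of the non-unit factors. -/
theorem exists_pow_dvd_list_prod_apply [Fintype ι] {a : ∀ i, D i} {M : ι → ℕ}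
    (hM : ∀ i, DvdNonunitProds (a i) (M i)) (t : ℕ) {l : List (∀ i, D i)}
    (hl : ∀ x ∈ l, ¬IsUnit x) (hlen : ∑ i, t * M i < l.length) :
    ∃ i, a i ^ t ∣ l.prod i := by
  obtain ⟨i, -, hi⟩ := Finset.exists_lt_of_sum_lt
    (hlen.trans_le (length_le_sum_countP_not_isUnit_apply hl))
  refine ⟨i, ?_⟩
  let nonunits := (l.map fun x => x i).filter fun y => ¬IsUnit y
  have hdvd : nonunits.prod ∣ l.prod i := by
    rw [Pi.list_prod_apply]
    exact List.filter_sublist.prod_dvd_prod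
  refine dvd_trans ((hM i).pow_dvd_prod t
    (fun y hy => by simpa using (List.mem_filter.mp hy).2) ?_) hdvd
  rw [← List.countP_eq_length_filter, List.countP_map]
  exact hi.le

theorem exists_add_mul_mem_mLengths_of_pow_dvd_apply [Fintype ι] [DecidableEq ι]
    (hD : ∀ i (x : D i), (mLengths x).Nonempty) {b : ∀ i, D i} {i : ι} {a : D i} {p q t : ℕ}
    (hp : p ∈ mLengths a) (hq : q ∈ mLengths a) (hpq : p ≠ q) (hab : a ^ t ∣ b i) :
    ∃ c r, 0 < r ∧ ∀ j ≤ t, c + j * r ∈ mLengths b := by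
  obtain ⟨e, he⟩ := hab
  have hb : b = Pi.mulSingle i a ^ t * Function.update b i e := by
    ext j
    rcases eq_or_ne j i with rfl | hj
    · simp [he]
    · simp [hj]
  obtain ⟨F, hF⟩ := mLengths_pi_nonempty fun j => hD j (Function.update b i e j)
  rw [hb]
  exact exists_add_mul_mem_mLengths_pow_mul (mem_mLengths_mulSingle hp)
    (mem_mLengths_mulSingle hq) hpq hF t

end Pi

theorem stmt9_general {n : ℕ} (D : Fin n → Type*) [∀ i, CancelCommMonoid (D i)]
    (hsp : ∀ i, StronglyPrimary (D i))
    (hnhf : ∀ i, ∃ a : D i, ∃ m ∈ mLengths a, ∃ k ∈ mLengths a, m ≠ k)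
    (L : Set ℕ) (hfin : L.Finite) (hne : L.Nonempty) :
    ∃ yL : ℕ, ∀ y ≥ yL, ∀ b : (∀ i, D i), mLengths b ≠ (fun m => y + m) '' L := by
  choose a p hp q hq hpq using hnhf
  choose M hM using fun i => ((hsp i).2 (a i)
    (not_isUnit_of_mem_mLengths_of_ne (hp i) (hq i) (hpq i))).imp fun _ => And.right
  refine ⟨∑ i, L.ncard * M i + 1, fun y hy b hb => ?_⟩
  obtain ⟨m, hm⟩ := hne
  obtain ⟨l, hlen, hl, hlb⟩ := mem_mLengths_iff.mp (hb ▸ ⟨m, hm, rfl⟩ : y + m ∈ mLengths b)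
  obtain ⟨i, hi⟩ := exists_pow_dvd_list_prod_apply hM L.ncard (fun x hx => (hl x hx).not_isUnit)
    (by omega)
  obtain ⟨c, r, hr, hprog⟩ := exists_add_mul_mem_mLengths_of_pow_dvd_apply
    (fun j => (hsp j).mLengths_nonempty) (hp i) (hq i) (hpq i)
    (hi.trans (hlb.map (Pi.evalMonoidHom D i)).dvd)
  have hcard := le_ncard_of_forall_add_mul_mem (hb ▸ hfin.image _) hr hprog
  rw [hb, Set.ncard_image_of_injective _ (add_right_injective y)] at hcard
  omega

/-- Let `D = D₁ × … × D_n` be a finite direct product of strongly primary monoids, none of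
which is half-factorial. Then for every finite nonempty set `L` of positive integers there is
`y_L` such that for all `y ≥ y_L` the shifted set `y + L` is not a set of lengths of `D`. -/
theorem stmt9 {n : ℕ} (hn : 0 < n) (D : Fin n → Type*) [∀ i, CancelCommMonoid (D i)]
    (hsp : ∀ i, StronglyPrimary (D i))
    (hnhf : ∀ i, ∃ a : D i, ∃ m ∈ mLengths a, ∃ k ∈ mLengths a, m ≠ k)
    (L : Set ℕ) (hfin : L.Finite) (hne : L.Nonempty) (hpos : ∀ m ∈ L, 0 < m) :
    ∃ yL : ℕ, ∀ y ≥ yL, ∀ b : (∀ i, D i), mLengths b ≠ (fun m => y + m) '' L :=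
  stmt9_general D hsp hnhf L hfin hne
end
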